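/- arXiv:2407.03121 — 6 statements merged into one kernel-verified Lean document; each statement's English description precedes it below -/
import Mathlib

section
/- Fix positive integers t and m. Every t-uniform hypergraph (set system of t-element sets) with more than t!·(m-1)^t edges contains a sunflower with m petals, i.e., m distinct sets whose pairwise intersections are all equal to a common core. -/
/-!
Induction on `t`. Take a maximal pairwise disjoint subfamily `𝒟 ⊆ 𝒜`. If it has `m` members, it
is already a sunflower with empty core. Otherwise its union `Y` has at most `(m - 1) t` points and,
by maximality, meets every member of `𝒜`; so some `x ∈ Y` lies in more than
`(t - 1)! (m - 1) ^ (t - 1)` members. Deleting `x` from these gives a `(t - 1)`-uniform family,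
whose sunflower given by induction becomes a sunflower of `𝒜` once `x` is put back into every
petal and into the core.
-/

open Finset Nat

section

variable {α : Type*} [DecidableEq α]

def IsSunflower (𝒮 : Finset (Finset α)) : Prop :=
  ∃ C : Finset α, ∀ A ∈ 𝒮, ∀ B ∈ 𝒮, A ≠ B → A ∩ B = C

theorem IsSunflower.of_pairwiseDisjoint {𝒮 : Finset (Finset α)}
    (h : (𝒮 : Set (Finset α)).PairwiseDisjoint id) : IsSunflower 𝒮 :=
  ⟨∅, fun _ hA _ hB hAB => disjoint_iff_inter_eq_empty.1 (h hA hB hAB)⟩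

theorem IsSunflower.image_insert {𝒮 : Finset (Finset α)} (h : IsSunflower 𝒮) (x : α) :
    IsSunflower (𝒮.image (insert x)) := by
  obtain ⟨C, hC⟩ := h
  refine ⟨insert x C, ?_⟩
  simp only [mem_image]
  rintro _ ⟨A, hA, rfl⟩ _ ⟨B, hB, rfl⟩ hAB
  rw [← insert_inter_distrib, hC A hA B hB (ne_of_apply_ne _ hAB)]

theorem exists_pairwiseDisjoint_forall_not_disjoint (𝒜 : Finset (Finset α)) :
    ∃ 𝒟 ⊆ 𝒜, (𝒟 : Set (Finset α)).PairwiseDisjoint id ∧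
      ∀ A ∈ 𝒜, A.Nonempty → ∃ D ∈ 𝒟, ¬Disjoint A D := by
  classical
  obtain ⟨𝒟, h𝒟, hmax⟩ := exists_max_image
    (𝒜.powerset.filter fun 𝒟 : Finset (Finset α) => (𝒟 : Set (Finset α)).PairwiseDisjoint id)
    card ⟨∅, by simp⟩
  simp only [mem_filter, mem_powerset, and_imp] at h𝒟 hmax
  refine ⟨𝒟, h𝒟.1, h𝒟.2, fun A hA hne => ?_⟩
  by_contra! hdisj
  have hA𝒟 : A ∉ 𝒟 := fun h => hne.ne_empty ((disjoint_self_iff_empty A).1 (hdisj A h))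
  have hins := hmax (insert A 𝒟) (insert_subset hA h𝒟.1)
    (by rw [coe_insert]; exact h𝒟.2.insert fun D hD _ => hdisj D hD)
  rw [card_insert_of_notMem hA𝒟] at hins
  omega

theorem exists_lt_card_filter_mem {𝒜 : Finset (Finset α)} {Y : Finset α} {n : ℕ}
    (hY : ∀ A ∈ 𝒜, ∃ x ∈ Y, x ∈ A) (hn : #Y * n < #𝒜) :
    ∃ x ∈ Y, n < #{A ∈ 𝒜 | x ∈ A} := by
  have hcover : 𝒜 ⊆ Y.biUnion fun x => {A ∈ 𝒜 | x ∈ A} := fun A hA => by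
    obtain ⟨x, hxY, hxA⟩ := hY A hA
    exact mem_biUnion.2 ⟨x, hxY, mem_filter.2 ⟨hA, hxA⟩⟩
  by_contra! h
  have := (card_le_card hcover).trans (card_biUnion_le_card_mul _ _ n h)
  omega

theorem card_memberSubfamily (x : α) (𝒜 : Finset (Finset α)) :
    #(𝒜.memberSubfamily x) = #{A ∈ 𝒜 | x ∈ A} :=
  card_image_of_injOn <| (erase_injOn' x).mono fun _ hA => (mem_filter.1 hA).2

theorem card_eq_of_mem_memberSubfamily {𝒜 : Finset (Finset α)} {x : α} {t : ℕ}
    (hunif : ∀ A ∈ 𝒜, #A = t + 1) : ∀ B ∈ 𝒜.memberSubfamily x, #B = t := by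
  intro B hB
  obtain ⟨hxB𝒜, hxB⟩ := mem_memberSubfamily.1 hB
  have := hunif _ hxB𝒜
  rw [card_insert_of_notMem hxB] at this
  omega

theorem exists_isSunflower_of_memberSubfamily {𝒜 𝒮 : Finset (Finset α)} {x : α}
    (h𝒮 : 𝒮 ⊆ 𝒜.memberSubfamily x) (hsun : IsSunflower 𝒮) :
    ∃ 𝒯 ⊆ 𝒜, #𝒯 = #𝒮 ∧ IsSunflower 𝒯 := by
  have hmem : ∀ B ∈ 𝒮, insert x B ∈ 𝒜 ∧ x ∉ B := fun B hB => mem_memberSubfamily.1 (h𝒮 hB)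
  refine ⟨𝒮.image (insert x), image_subset_iff.2 fun B hB => (hmem B hB).1, ?_,
    hsun.image_insert x⟩
  refine card_image_of_injOn fun B hB C hC hBC => ?_
  simpa [erase_insert (hmem B hB).2, erase_insert (hmem C hC).2] using congrArg (erase · x) hBC

theorem exists_isSunflower_of_card_lt (m : ℕ) {t : ℕ} {𝒜 : Finset (Finset α)}
    (hunif : ∀ A ∈ 𝒜, #A = t) (hcard : t ! * (m - 1) ^ t < #𝒜) :
    ∃ 𝒮 ⊆ 𝒜, #𝒮 = m ∧ IsSunflower 𝒮 := by
  induction t generalizing 𝒜 with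
  | zero =>
    have h𝒜 := card_le_card fun A hA => mem_singleton.2 (card_eq_zero.1 (hunif A hA))
    simp only [factorial_zero, pow_zero, mul_one, card_singleton] at hcard h𝒜
    omega
  | succ t ih =>
    obtain ⟨𝒟, h𝒟𝒜, h𝒟disj, h𝒟hit⟩ := exists_pairwiseDisjoint_forall_not_disjoint 𝒜
    by_cases hm : m ≤ #𝒟
    · obtain ⟨𝒮, h𝒮𝒟, h𝒮⟩ := exists_subset_card_eq hm
      exact ⟨𝒮, h𝒮𝒟.trans h𝒟𝒜, h𝒮, .of_pairwiseDisjoint (h𝒟disj.subset h𝒮𝒟)⟩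
    set Y := 𝒟.biUnion id
    have hY : #Y ≤ (m - 1) * (t + 1) :=
      (card_biUnion_le_card_mul _ _ _ fun D hD => (hunif D (h𝒟𝒜 hD)).le).trans
        (Nat.mul_le_mul_right _ (by omega))
    have hhit : ∀ A ∈ 𝒜, ∃ x ∈ Y, x ∈ A := by
      intro A hA
      obtain ⟨D, hD, hAD⟩ := h𝒟hit A hA (card_pos.1 (by rw [hunif A hA]; omega))
      obtain ⟨x, hxA, hxD⟩ := not_disjoint_iff.1 hAD
      exact ⟨x, mem_biUnion.2 ⟨D, hD, hxD⟩, hxA⟩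
    obtain ⟨x, -, hx⟩ := exists_lt_card_filter_mem hhit <| calc
      #Y * (t ! * (m - 1) ^ t) ≤ (m - 1) * (t + 1) * (t ! * (m - 1) ^ t) :=
        Nat.mul_le_mul_right _ hY
      _ = (t + 1)! * (m - 1) ^ (t + 1) := by rw [factorial_succ, pow_succ]; ring
      _ < #𝒜 := hcard
    rw [← card_memberSubfamily] at hx
    obtain ⟨𝒮, h𝒮, h𝒮m, hsun⟩ := ih (card_eq_of_mem_memberSubfamily hunif) hx
    obtain ⟨𝒯, h𝒯𝒜, h𝒯𝒮, h𝒯⟩ := exists_isSunflower_of_memberSubfamily h𝒮 hsun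
    exact ⟨𝒯, h𝒯𝒜, h𝒯𝒮.trans h𝒮m, h𝒯⟩

end

theorem stmt3_general {α : Type} [DecidableEq α] (t m : ℕ)
    (𝒜 : Finset (Finset α)) (hunif : ∀ A ∈ 𝒜, A.card = t)
    (hcard : Nat.factorial t * (m - 1) ^ t < 𝒜.card) :
    ∃ 𝒮 ⊆ 𝒜, 𝒮.card = m ∧
      ∃ C : Finset α, ∀ A ∈ 𝒮, ∀ B ∈ 𝒮, A ≠ B → A ∩ B = C :=
  exists_isSunflower_of_card_lt m hunif hcard

/-- Erdős–Rado sunflower lemma: every `t`-uniform family of more than `t!·(m-1)^t` sets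
contains a sunflower with `m` petals. -/
theorem stmt3 {α : Type} [DecidableEq α] (t m : ℕ) (ht : 0 < t) (hm : 0 < m)
    (𝒜 : Finset (Finset α)) (hunif : ∀ A ∈ 𝒜, A.card = t)
    (hcard : Nat.factorial t * (m - 1) ^ t < 𝒜.card) :
    ∃ 𝒮 ⊆ 𝒜, 𝒮.card = m ∧
      ∃ C : Finset α, ∀ A ∈ 𝒮, ∀ B ∈ 𝒮, A ≠ B → A ∩ B = C :=
  stmt3_general t m 𝒜 hunif hcard
end

section
/- Let F be a triangle-free graph. Let G be a graph that is an edge-disjoint union of cliques K^1,...,K^N such that every triangle of G lies entirely within one of the cliques. If each clique K^i is replaced by (the edges of) a blowup of F on the vertex set of K^i (i.e., within K^i, edges are retained only between color classes of a vertex-coloring of K^i by V(F) corresponding to edges of F), then the resulting graph is triangle-free. -/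
/-- If `G` is an edge-disjoint union of cliques `K^1, …, K^N` such that every triangle of
`G` lies inside one of the cliques, and inside each clique the edges are replaced by the
edges of a blowup of a triangle-free graph `F` (via a coloring `χ i : V → V(F)`), then the
resulting graph `H` is triangle-free. -/
theorem stmt7 {α V : Type} (F : SimpleGraph α)
    (hF : ∀ a b c : α, ¬ (F.Adj a b ∧ F.Adj b c ∧ F.Adj a c))
    (G : SimpleGraph V) (N : ℕ) (K : Fin N → Set V)
    (hclique : ∀ i, ∀ x ∈ K i, ∀ y ∈ K i, x ≠ y → G.Adj x y)
    (hcover : ∀ x y, G.Adj x y → ∃ i, x ∈ K i ∧ y ∈ K i)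
    (hdisj : ∀ i j, i ≠ j → ∀ x y : V, x ≠ y →
      x ∈ K i → y ∈ K i → x ∈ K j → y ∈ K j → False)
    (htri : ∀ x y z, G.Adj x y → G.Adj y z → G.Adj x z →
      ∃ i, x ∈ K i ∧ y ∈ K i ∧ z ∈ K i)
    (χ : Fin N → V → α) (H : SimpleGraph V)
    (hH : ∀ x y, H.Adj x y ↔
      x ≠ y ∧ ∃ i, x ∈ K i ∧ y ∈ K i ∧ F.Adj (χ i x) (χ i y)) :
    ∀ x y z : V, ¬ (H.Adj x y ∧ H.Adj y z ∧ H.Adj x z) := by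
  rintro x y z ⟨hxy, hyz, hxz⟩
  obtain ⟨hxyne, i, hxi, hyi, hFi⟩ := (hH x y).1 hxy
  obtain ⟨hyzne, j, hyj, hzj, hFj⟩ := (hH y z).1 hyz
  obtain ⟨hxzne, k, hxk, hzk, hFk⟩ := (hH x z).1 hxz
  obtain ⟨m, hxm, hym, hzm⟩ := htri x y z
    (hclique i x hxi y hyi hxyne) (hclique j y hyj z hzj hyzne)
    (hclique k x hxk z hzk hxzne)
  have hi : i = m := by
    by_contra h; exact hdisj i m h x y hxyne hxi hyi hxm hym
  have hj : j = m := by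
    by_contra h; exact hdisj j m h y z hyzne hyj hzj hym hzm
  have hk : k = m := by
    by_contra h; exact hdisj k m h x z hxzne hxk hzk hxm hzm
  subst hi hj hk
  exact hF _ _ _ ⟨hFi, hFj, hFk⟩
end

section
/- Define a sequence α(s) by α(4) = 1/3 + ε for some 0 < ε ≤ 1, and α(s) = 1 - 1/(1 + α(s-1)) for s ≥ 5. Then for all s ≥ 4, α(s) > 1/(s-1); moreover, if α(s-1) ≥ 1/(s-2) + ε with 0 < ε ≤ 1, then α(s) ≥ 1/(s-1) + ε/4. -/
/-!
The recurrence is `α(s) = g(α(s-1))` for `g x = 1 - 1/(1+x) = x/(1+x)`, which sends `1/d` to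
`1/(d+1)` and is increasing on `(-1, ∞)`; this gives `α(s) > 1/(s-1)` by induction. Since
`g b - g a = (b-a)/((1+a)(1+b))`, an excess `ε ≤ 1` over `1/(s-2) ≤ 1/2` is pushed through `g`
to an excess of at least `ε/((3/2)(5/2)) ≥ ε/4` over `1/(s-1)`.
-/

lemma one_sub_one_div_one_add {x : ℝ} (hx : 1 + x ≠ 0) : 1 - 1 / (1 + x) = x / (1 + x) := by
  field_simp
  ring

lemma one_div_div_one_add_one_div {d : ℝ} (hd : 0 < d) : 1 / d / (1 + 1 / d) = 1 / (d + 1) := by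
  field_simp

lemma div_one_add_sub_div_one_add {a b : ℝ} (ha : 0 < 1 + a) (hb : 0 < 1 + b) :
    b / (1 + b) - a / (1 + a) = (b - a) / ((1 + a) * (1 + b)) := by
  field_simp
  ring

lemma strictMonoOn_div_one_add : StrictMonoOn (fun x : ℝ ↦ x / (1 + x)) (Set.Ioi (-1)) := by
  intro a ha b hb hab
  have ha' : 0 < 1 + a := by linarith [Set.mem_Ioi.mp ha]
  have hb' : 0 < 1 + b := by linarith [Set.mem_Ioi.mp hb]
  rw [← sub_pos, div_one_add_sub_div_one_add ha' hb']
  exact div_pos (by linarith) (mul_pos ha' hb')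

lemma one_div_lt_one_sub_one_div_one_add {c x : ℝ} (hc : 1 < c) (hx : 1 / (c - 1) < x) :
    1 / c < 1 - 1 / (1 + x) := by
  have hd : 0 < c - 1 := by linarith
  have hd₀ : -1 < 1 / (c - 1) := by linarith [one_div_pos.mpr hd]
  calc 1 / c = 1 / (c - 1) / (1 + 1 / (c - 1)) := by
        rw [one_div_div_one_add_one_div hd, sub_add_cancel]
    _ < x / (1 + x) := strictMonoOn_div_one_add hd₀ (hd₀.trans hx) hx
    _ = 1 - 1 / (1 + x) := (one_sub_one_div_one_add (by linarith)).symm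

lemma one_div_add_le_one_sub_one_div_one_add {c a ε : ℝ} (hc : 4 ≤ c) (hε : 0 < ε)
    (hε1 : ε ≤ 1) (ha : 1 / (c - 2) + ε ≤ a) : 1 / (c - 1) + ε / 4 ≤ 1 - 1 / (1 + a) := by
  set y := 1 / (c - 2) with hy
  have hd : 0 < c - 2 := by linarith
  have hy₀ : 0 < y := one_div_pos.mpr hd
  have hy_le : y ≤ 1 / 2 := by
    rw [hy, div_le_div_iff₀ hd two_pos]
    linarith
  have hgain : ε / 4 ≤ ε / ((1 + y) * (1 + (y + ε))) :=
    div_le_div_of_nonneg_left hε.le (by positivity) (by nlinarith)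
  have hval : y / (1 + y) = 1 / (c - 1) := by
    rw [hy, one_div_div_one_add_one_div hd]
    ring
  have hstep := div_one_add_sub_div_one_add (a := y) (b := y + ε) (by linarith) (by linarith)
  rw [add_sub_cancel_left] at hstep
  calc 1 / (c - 1) + ε / 4 ≤ (y + ε) / (1 + (y + ε)) := by linarith
    _ ≤ a / (1 + a) :=
        strictMonoOn_div_one_add.monotoneOn (Set.mem_Ioi.mpr (by linarith))
          (Set.mem_Ioi.mpr (by linarith)) ha
    _ = 1 - 1 / (1 + a) := (one_sub_one_div_one_add (by linarith)).symm

theorem stmt10_general (ε : ℝ) (hε : 0 < ε) (α : ℕ → ℝ)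
    (h4 : α 4 = 1/3 + ε)
    (hrec : ∀ s : ℕ, 5 ≤ s → α s = 1 - 1/(1 + α (s - 1))) :
    (∀ s : ℕ, 4 ≤ s → 1/((s : ℝ) - 1) < α s) ∧
    (∀ s : ℕ, 5 ≤ s → ∀ ε' : ℝ, 0 < ε' → ε' ≤ 1 →
      1/((s : ℝ) - 2) + ε' ≤ α (s - 1) → 1/((s : ℝ) - 1) + ε'/4 ≤ α s) := by
  refine ⟨fun s hs ↦ ?_, fun s hs ε' hε' hε'1 h ↦ ?_⟩
  · induction s, hs using Nat.le_induction with
    | base => norm_num [h4, hε]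
    | succ n hn ih =>
      rw [hrec (n + 1) (by omega), Nat.add_sub_cancel, Nat.cast_succ, add_sub_cancel_right]
      have hn4 : (4 : ℝ) ≤ n := by exact_mod_cast hn
      exact one_div_lt_one_sub_one_div_one_add (by linarith) ih
  · have hs5 : (5 : ℝ) ≤ s := by exact_mod_cast hs
    rw [hrec s hs]
    exact one_div_add_le_one_sub_one_div_one_add (by linarith) hε' hε'1 h

/-- The recurrence `α(4) = 1/3 + ε`, `α(s) = 1 - 1/(1 + α(s-1))` satisfies
`α(s) > 1/(s-1)` for all `s ≥ 4`; moreover if `α(s-1) ≥ 1/(s-2) + ε` with `0 < ε ≤ 1`,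
then `α(s) ≥ 1/(s-1) + ε/4`. -/
theorem stmt10 (ε : ℝ) (hε : 0 < ε) (hε1 : ε ≤ 1) (α : ℕ → ℝ)
    (h4 : α 4 = 1/3 + ε)
    (hrec : ∀ s : ℕ, 5 ≤ s → α s = 1 - 1/(1 + α (s - 1))) :
    (∀ s : ℕ, 4 ≤ s → 1/((s : ℝ) - 1) < α s) ∧
    (∀ s : ℕ, 5 ≤ s → ∀ ε' : ℝ, 0 < ε' → ε' ≤ 1 →
      1/((s : ℝ) - 2) + ε' ≤ α (s - 1) → 1/((s : ℝ) - 1) + ε'/4 ≤ α s) :=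
  stmt10_general ε hε α h4 hrec
end

section
/- Let G be a graph of maximum degree d ≥ 2 and let δ > 0. Suppose some vertex v_0 of G lies on at least δ·d^{k-1} cycles of length k (k ≥ 4 fixed). Then there exist vertex sets X, Y ⊆ V(G) with e(X,Y) ≥ (δ/(2 log₂ d)^k)·|X||Y| and min(|X|,|Y|) ≥ δ·d/(log₂ d)^{k-3}. -/
/-!
Count closed walks with the adjacency matrix `A`:
`(A ^ k) v₀ v₀ = ∑ y, (A ^ 2) v₀ y * (A ^ (k-2)) y v₀`, and `(A ^ 2) v₀ y` is the number of
neighbours of `y` in `X = N(v₀)`. Let `Y` be the set of vertices with at least `τ |X|` neighbours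
in `X`, where `τ = δ / (2 log₂ d) ^ k ≤ δ`. Since the column sums of `A ^ (k-2)` are at most
`|X| d ^ (k-3)`, the vertices outside `Y` contribute at most `τ d ^ (k-1)`, while each vertex of
`Y` contributes at most `d ^ (k-2)`. As there are at least `2 δ d ^ (k-1)` closed walks of length
`k` at `v₀`, this forces `|Y| ≥ δ d`, and `|X| ≥ 2 δ d` because there are at most
`|X| d ^ (k-2)` of them.
-/

open Finset

namespace SimpleGraph

variable {V : Type*} [Fintype V]

noncomputable def heavyVertices (G : SimpleGraph V) [DecidableRel G.Adj] (X : Finset V) (τ : ℝ) :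
    Finset V :=
  {y | τ * #X ≤ #{x ∈ X | G.Adj x y}}

variable {G : SimpleGraph V} [DecidableRel G.Adj]

lemma mul_card_le_card_adj_heavyVertices (X : Finset V) (τ : ℝ) :
    τ * #X * #(G.heavyVertices X τ) ≤ #{p ∈ X ×ˢ G.heavyVertices X τ | G.Adj p.1 p.2} := by
  rw [card_filter, sum_product_right, mul_comm, ← nsmul_eq_mul, ← sum_const]
  push_cast
  refine sum_le_sum fun y hy => ?_
  simpa [heavyVertices, ← card_filter] using hy

variable [DecidableEq V] {d : ℕ}

local notation "A" => G.adjMatrix ℝ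

lemma adjMatrix_pow_apply_nonneg (n : ℕ) (u v : V) : 0 ≤ (A ^ n) u v := by
  rw [adjMatrix_pow_apply_eq_card_walk]
  positivity

lemma adjMatrix_sq_apply (u v : V) :
    (A ^ 2) u v = #{x ∈ G.neighborFinset u | G.Adj x v} := by
  rw [sq, adjMatrix_mul_apply]
  simp [adjMatrix_apply, sum_boole]

lemma ncard_setOf_isCycle_length_le (u : V) (k : ℕ) :
    ({p : G.Walk u u | p.IsCycle ∧ p.length = k}.ncard : ℝ) ≤ (A ^ k) u u := by
  rw [adjMatrix_pow_apply_eq_card_walk, ← Nat.card_eq_fintype_card, Nat.card_coe_set_eq]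
  gcongr
  · exact Set.toFinite _
  · exact And.right

variable (hdeg : ∀ v, G.degree v ≤ d)
include hdeg

lemma sum_adjMatrix_pow_apply_le (n : ℕ) (u : V) : ∑ v, (A ^ n) u v ≤ d ^ n := by
  induction n generalizing u with
  | zero => simp [Matrix.one_apply]
  | succ n ih =>
    calc ∑ v, (A ^ (n + 1)) u v = ∑ w ∈ G.neighborFinset u, ∑ v, (A ^ n) w v := by
          simp only [pow_succ', adjMatrix_mul_apply]
          exact sum_comm
      _ ≤ ∑ w ∈ G.neighborFinset u, (d : ℝ) ^ n := sum_le_sum fun w _ => ih w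
      _ = G.degree u * d ^ n := by simp
      _ ≤ d ^ (n + 1) := by
          rw [pow_succ']
          gcongr
          exact_mod_cast hdeg u

lemma adjMatrix_pow_succ_apply_le (n : ℕ) (u v : V) : (A ^ (n + 1)) u v ≤ d ^ n :=
  calc (A ^ (n + 1)) u v = ∑ w ∈ G.neighborFinset v, (A ^ n) u w := by
        rw [pow_succ, mul_adjMatrix_apply]
    _ ≤ ∑ w, (A ^ n) u w :=
        sum_le_sum_of_subset_of_nonneg (subset_univ _) fun w _ _ => adjMatrix_pow_apply_nonneg ..
    _ ≤ d ^ n := sum_adjMatrix_pow_apply_le hdeg n u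

lemma adjMatrix_pow_add_two_apply_le (n : ℕ) (u v : V) :
    (A ^ (n + 2)) u v ≤ G.degree u * d ^ n :=
  calc (A ^ (n + 2)) u v = ∑ w ∈ G.neighborFinset u, (A ^ (n + 1)) w v := by
        rw [pow_succ', adjMatrix_mul_apply]
    _ ≤ ∑ w ∈ G.neighborFinset u, (d : ℝ) ^ n :=
        sum_le_sum fun w _ => adjMatrix_pow_succ_apply_le hdeg n w v
    _ = G.degree u * d ^ n := by simp

lemma sum_adjMatrix_pow_succ_apply_le (n : ℕ) (u : V) :
    ∑ v, (A ^ (n + 1)) u v ≤ G.degree u * d ^ n :=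
  calc ∑ v, (A ^ (n + 1)) u v = ∑ w ∈ G.neighborFinset u, ∑ v, (A ^ n) w v := by
        simp only [pow_succ', adjMatrix_mul_apply]
        exact sum_comm
    _ ≤ ∑ w ∈ G.neighborFinset u, (d : ℝ) ^ n :=
        sum_le_sum fun w _ => sum_adjMatrix_pow_apply_le hdeg n w
    _ = G.degree u * d ^ n := by simp

lemma adjMatrix_pow_apply_self_le {τ : ℝ} (hτ : 0 ≤ τ) (n : ℕ) (v : V) :
    (A ^ (n + 3)) v v ≤
      G.degree v * d ^ n * (τ * G.degree v + #(G.heavyVertices (G.neighborFinset v) τ)) := by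
  set Y := G.heavyVertices (G.neighborFinset v) τ
  have hsq (y : V) : (A ^ 2) v y ≤ G.degree v := by
    rw [adjMatrix_sq_apply, ← card_neighborFinset_eq_degree]
    exact_mod_cast card_filter_le _ _
  have hlight (y : V) (hy : y ∈ Yᶜ) : (A ^ 2) v y ≤ τ * G.degree v := by
    simp only [Y, heavyVertices, mem_compl, mem_filter_univ, not_le] at hy
    rw [adjMatrix_sq_apply]
    simpa using hy.le
  have hcol : ∑ y, (A ^ (n + 1)) y v ≤ G.degree v * d ^ n := by
    simp only [((isSymm_adjMatrix G).pow (n + 1)).apply]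
    exact sum_adjMatrix_pow_succ_apply_le hdeg n v
  have hnn := adjMatrix_pow_apply_nonneg (G := G) (n + 1)
  calc (A ^ (n + 3)) v v = ∑ y, (A ^ 2) v y * (A ^ (n + 1)) y v := by
        rw [show n + 3 = 2 + (n + 1) by omega, pow_add, Matrix.mul_apply]
    _ = ∑ y ∈ Y, (A ^ 2) v y * (A ^ (n + 1)) y v +
          ∑ y ∈ Yᶜ, (A ^ 2) v y * (A ^ (n + 1)) y v := (sum_add_sum_compl _ _).symm
    _ ≤ ∑ y ∈ Y, (G.degree v : ℝ) * d ^ n +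
          ∑ y ∈ Yᶜ, τ * G.degree v * (A ^ (n + 1)) y v :=
        add_le_add
          (sum_le_sum fun y _ => mul_le_mul (hsq y) (adjMatrix_pow_succ_apply_le hdeg n y v)
            (hnn y v) (Nat.cast_nonneg _))
          (sum_le_sum fun y hy => mul_le_mul_of_nonneg_right (hlight y hy) (hnn y v))
    _ ≤ ∑ y ∈ Y, (G.degree v : ℝ) * d ^ n + ∑ y, τ * G.degree v * (A ^ (n + 1)) y v := by
        gcongr
        · exact fun y _ _ => mul_nonneg (mul_nonneg hτ (Nat.cast_nonneg _)) (hnn y v)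
        · exact subset_univ _
    _ ≤ #Y * (G.degree v * d ^ n) + τ * G.degree v * (G.degree v * d ^ n) := by
        rw [sum_const, nsmul_eq_mul, ← mul_sum]
        gcongr
    _ = G.degree v * d ^ n * (τ * G.degree v + #Y) := by ring

end SimpleGraph

theorem stmt11_general {V : Type} [Fintype V] (G : SimpleGraph V)
    [DecidableRel G.Adj] (d k : ℕ) (δ : ℝ) (hd : 2 ≤ d) (hk : 4 ≤ k) (hδ : 0 < δ)
    (hdeg : ∀ v, G.degree v ≤ d) (v₀ : V)
    (hcyc : δ * (d : ℝ) ^ (k - 1) ≤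
      ({p : G.Walk v₀ v₀ | p.IsCycle ∧ p.length = k}.ncard : ℝ) / 2) :
    ∃ X Y : Finset V,
      δ / (2 * Real.logb 2 d) ^ k * X.card * Y.card ≤
        (((X ×ˢ Y).filter fun p => G.Adj p.1 p.2).card : ℝ) ∧
      δ * d / (Real.logb 2 d) ^ (k - 3) ≤ min (X.card : ℝ) (Y.card : ℝ) := by
  classical
  obtain ⟨n, rfl⟩ : ∃ n, k = n + 3 := ⟨k - 3, by omega⟩
  have hd₀ : (0 : ℝ) < d := by positivity
  have hL : 1 ≤ Real.logb 2 d := by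
    rw [Real.le_logb_iff_rpow_le one_lt_two hd₀, Real.rpow_one]
    exact_mod_cast hd
  set τ := δ / (2 * Real.logb 2 d) ^ (n + 3)
  have hτ : 0 ≤ τ := by positivity
  have hτδ : τ ≤ δ := div_le_self hδ.le (one_le_pow₀ (by linarith))
  set X := G.neighborFinset v₀
  set Y := G.heavyVertices X τ
  have hwalks : 2 * δ * d ^ (n + 2) ≤ (G.adjMatrix ℝ ^ (n + 3)) v₀ v₀ := by
    have := G.ncard_setOf_isCycle_length_le v₀ (n + 3)
    rw [show n + 3 - 1 = n + 2 by omega] at hcyc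
    linarith
  have hX : 2 * δ * d ≤ #X := by
    refine le_of_mul_le_mul_right ?_ (pow_pos hd₀ (n + 1))
    calc 2 * δ * d * d ^ (n + 1) = 2 * δ * d ^ (n + 2) := by ring
      _ ≤ G.degree v₀ * d ^ (n + 1) :=
        hwalks.trans (SimpleGraph.adjMatrix_pow_add_two_apply_le hdeg ..)
      _ = #X * d ^ (n + 1) := by rw [G.card_neighborFinset_eq_degree]
  have hY : δ * d ≤ #Y := by
    have hdeg₀ : (G.degree v₀ : ℝ) ≤ d := by exact_mod_cast hdeg v₀
    have : 2 * δ * d * d ^ (n + 1) ≤ (δ * d + #Y) * d ^ (n + 1) :=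
      calc 2 * δ * d * d ^ (n + 1) = 2 * δ * d ^ (n + 2) := by ring
        _ ≤ G.degree v₀ * d ^ n * (τ * G.degree v₀ + #Y) :=
          hwalks.trans (SimpleGraph.adjMatrix_pow_apply_self_le hdeg hτ n v₀)
        _ ≤ d * d ^ n * (δ * d + #Y) := by gcongr
        _ = (δ * d + #Y) * d ^ (n + 1) := by ring
    linarith [le_of_mul_le_mul_right this (pow_pos hd₀ (n + 1))]
  have hmin : δ * d / Real.logb 2 d ^ n ≤ δ * d :=
    div_le_self (by positivity) (one_le_pow₀ hL)
  refine ⟨X, Y, G.mul_card_le_card_adj_heavyVertices X τ, ?_⟩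
  rw [Nat.add_sub_cancel]
  exact le_min (by linarith) (hmin.trans hY)

/-- If `G` has maximum degree at most `d ≥ 2` and a vertex `v₀` lies on at least
`δ·d^{k-1}` cycles of length `k` (each cycle of length `k` through `v₀` corresponds to
exactly two closed walks at `v₀` that are cycles of length `k`), then there are sets
`X, Y` with `e(X,Y) ≥ (δ/(2 log₂ d)^k)·|X||Y|` and `min(|X|,|Y|) ≥ δ·d/(log₂ d)^{k-3}`. -/
theorem stmt11 {V : Type} [Fintype V] [DecidableEq V] (G : SimpleGraph V)
    [DecidableRel G.Adj] (d k : ℕ) (δ : ℝ) (hd : 2 ≤ d) (hk : 4 ≤ k) (hδ : 0 < δ)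
    (hdeg : ∀ v, G.degree v ≤ d) (v₀ : V)
    (hcyc : δ * (d : ℝ) ^ (k - 1) ≤
      ({p : G.Walk v₀ v₀ | p.IsCycle ∧ p.length = k}.ncard : ℝ) / 2) :
    ∃ X Y : Finset V,
      δ / (2 * Real.logb 2 d) ^ k * X.card * Y.card ≤
        (((X ×ˢ Y).filter fun p => G.Adj p.1 p.2).card : ℝ) ∧
      δ * d / (Real.logb 2 d) ^ (k - 3) ≤ min (X.card : ℝ) (Y.card : ℝ) :=
  stmt11_general G d k δ hd hk hδ hdeg v₀ hcyc
end

section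
/- For any N, R ≥ 3 with N ≥ R ≥ log N, there exists an N-vertex R-uniform hypergraph H such that: (i) |E(H)| ≥ N² / R^{8√(log_R N)}; (ii) H is linear (any two distinct edges meet in at most one vertex); (iii) H is triangle-free (any three distinct edges pairwise meeting in single vertices have a common vertex). -/
/-!
Edges are blocks of `R` consecutive terms of arithmetic progressions: for a difference `s` in a
set `S` and an offset `r` below `min S`, the blocks `{r + s (R u + i) : i < R}` of the progression
`r + sℕ` are pairwise disjoint, and so are blocks with the same `s` and different offsets. Two
edges sharing two vertices, or three edges forming a triangle, give a relation
`c₁ s₁ + c₂ s₂ + c₃ s₃ = 0` with `|cᵢ| < R` and `c₁, c₂ ≠ 0`, where `sᵢ` are the differences of the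
edges. If every such relation forces `s₁ = s₂`, then the first two edges, which share a vertex,
have the same difference and hence coincide.

Such an `S` comes from Behrend's spheres: take the numbers with base-`Q` digits `(y, 1)`, where `y`
runs over the integer points of a sphere with coordinates below `m` and `3 R m ≤ Q`. A relation with
coefficients below `R` has no carries, so it holds digit by digit; the leading digit `1` gives
`c₁ + c₂ + c₃ = 0`, and then `c₁ y₁ + c₂ y₂ = (c₁ + c₂) y₃` with all three points on one sphere
forces `y₁ = y₂`.

With `t = √(log_R N)`, `n = ⌊t⌋` digits, `m = R ^ (n - 3)` and `Q = R ^ (n - 1)`, the pigeonhole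
principle gives a sphere with `m ^ (n - 2) / n` points, and the resulting
`|S| Q ^ n ⌊N / (2 R Q ^ n)⌋` edges beat `N² / R ^ (8 t)`. If `N² ≤ R ^ (8 t)`, a single edge
suffices.
-/

open Finset Behrend Real

section Hypergraph

variable {α : Type*} [DecidableEq α]

def IsLinearHypergraph (E : Finset (Finset α)) : Prop :=
  ∀ e ∈ E, ∀ f ∈ E, e ≠ f → #(e ∩ f) ≤ 1

def IsTriangleFreeHypergraph (E : Finset (Finset α)) : Prop :=
  ∀ e ∈ E, ∀ f ∈ E, ∀ g ∈ E, e ≠ f → f ≠ g → g ≠ e →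
    #(e ∩ f) = 1 → #(f ∩ g) = 1 → #(g ∩ e) = 1 → #(e ∩ f ∩ g) = 1

theorem isLinearHypergraph_of_two_mem_inter {E : Finset (Finset α)}
    (h : ∀ e ∈ E, ∀ f ∈ E, ∀ v ∈ e ∩ f, ∀ w ∈ e ∩ f, v ≠ w → e = f) :
    IsLinearHypergraph E := fun e he f hf hef => by
  by_contra! hcard
  obtain ⟨v, hv, w, hw, hvw⟩ := one_lt_card.1 hcard
  exact hef (h e he f hf v hv w hw hvw)

theorem isTriangleFreeHypergraph_of_no_triangle {E : Finset (Finset α)}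
    (h : ∀ e ∈ E, ∀ f ∈ E, ∀ g ∈ E, e ≠ f → ∀ u ∈ e ∩ f, ∀ v ∈ f ∩ g, ∀ w ∈ g ∩ e,
      u ≠ v → v ≠ w → w ≠ u → False) :
    IsTriangleFreeHypergraph E := by
  intro e he f hf g hg hef _ _ h₁ h₂ h₃
  obtain ⟨u, hu⟩ := card_eq_one.1 h₁
  obtain ⟨v, hv⟩ := card_eq_one.1 h₂
  obtain ⟨w, hw⟩ := card_eq_one.1 h₃
  have hu' : u ∈ e ∩ f := hu ▸ mem_singleton_self u
  have hv' : v ∈ f ∩ g := hv ▸ mem_singleton_self v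
  have hw' : w ∈ g ∩ e := hw ▸ mem_singleton_self w
  by_cases huv : u = v
  · subst huv
    rw [hu, singleton_inter_of_mem (mem_inter.1 hv').2, card_singleton]
  have hvw : v ≠ w := fun hvw => huv <| by
    have : v ∈ e ∩ f := mem_inter.2 ⟨hvw ▸ (mem_inter.1 hw').2, (mem_inter.1 hv').1⟩
    rw [hu] at this; exact (mem_singleton.1 this).symm
  have hwu : w ≠ u := fun hwu => huv <| by
    have : u ∈ f ∩ g := mem_inter.2 ⟨(mem_inter.1 hu').2, hwu ▸ (mem_inter.1 hw').1⟩
    rwa [hv, mem_singleton] at this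
  exact (h e he f hf g hg hef u hu' v hv' w hw' huv hvw hwu).elim

theorem exists_hypergraph_singleton {N R : ℕ} (hRN : R ≤ N) :
    ∃ E : Finset (Finset (Fin N)), (E : Set (Finset (Fin N))).Sized R ∧
      IsLinearHypergraph E ∧ IsTriangleFreeHypergraph E ∧ #E = 1 := by
  obtain ⟨e, -, he⟩ := exists_subset_card_eq (s := (univ : Finset (Fin N))) (by simpa using hRN)
  refine ⟨{e}, by simpa using he, ?_, ?_, card_singleton e⟩
  · simp [IsLinearHypergraph]
  · simp [IsTriangleFreeHypergraph]

end Hypergraph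

section Transfer

variable {N : ℕ}

def finRestrict (N : ℕ) (e : Finset ℕ) : Finset (Fin N) := univ.filter fun v => (v : ℕ) ∈ e

theorem map_finRestrict {e : Finset ℕ} (he : e ⊆ range N) :
    (finRestrict N e).map Fin.valEmbedding = e := by
  ext v
  simp only [finRestrict, mem_map, mem_filter, mem_univ, true_and, Fin.valEmbedding_apply]
  exact ⟨by rintro ⟨w, hw, rfl⟩; exact hw, fun hv => ⟨⟨v, mem_range.1 (he hv)⟩, hv, rfl⟩⟩

theorem card_finRestrict {e : Finset ℕ} (he : e ⊆ range N) : #(finRestrict N e) = #e := by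
  rw [← card_map Fin.valEmbedding, map_finRestrict he]

theorem finRestrict_inter (e f : Finset ℕ) :
    finRestrict N (e ∩ f) = finRestrict N e ∩ finRestrict N f := by
  ext; simp [finRestrict]

theorem exists_fin_copy {R : ℕ} {E : Finset (Finset ℕ)} (hE : ∀ e ∈ E, e ⊆ range N)
    (hsized : (E : Set (Finset ℕ)).Sized R) (hlin : IsLinearHypergraph E)
    (htri : IsTriangleFreeHypergraph E) :
    ∃ E' : Finset (Finset (Fin N)), #E' = #E ∧ (E' : Set (Finset (Fin N))).Sized R ∧
      IsLinearHypergraph E' ∧ IsTriangleFreeHypergraph E' := by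
  have hcard : ∀ e ∈ E, ∀ f ⊆ e, #(finRestrict N f) = #f := fun e he f hf =>
    card_finRestrict (hf.trans (hE e he))
  have hinj : Set.InjOn (finRestrict N) E := fun e he f hf h => by
    rw [← map_finRestrict (hE e he), ← map_finRestrict (hE f hf), h]
  refine ⟨E.image (finRestrict N), card_image_of_injOn hinj, ?_, ?_, ?_⟩
  · simp only [Set.Sized, coe_image, Set.mem_image, mem_coe, forall_exists_index, and_imp]
    rintro _ e he rfl
    rw [hcard e he e subset_rfl, hsized he]
  · simp only [IsLinearHypergraph, mem_image, forall_exists_index, and_imp]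
    rintro _ e he rfl _ f hf rfl hef
    rw [← finRestrict_inter, hcard e he _ inter_subset_left]
    exact hlin e he f hf (ne_of_apply_ne _ hef)
  · simp only [IsTriangleFreeHypergraph, mem_image, forall_exists_index, and_imp]
    rintro _ e he rfl _ f hf rfl _ g hg rfl hef hfg hge
    simp only [← finRestrict_inter, hcard e he _ inter_subset_left,
      hcard f hf _ inter_subset_left, hcard g hg _ inter_subset_left,
      hcard e he _ (inter_subset_left.trans inter_subset_left)]
    exact htri e he f hf g hg (ne_of_apply_ne _ hef) (ne_of_apply_ne _ hfg) (ne_of_apply_ne _ hge)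

end Transfer

theorem eq_zero_of_sum_mul_pow_add_mul_pow_eq_zero {Q : ℤ} :
    ∀ {n : ℕ} (c : Fin n → ℤ) (a : ℤ), (∀ i, |c i| < Q) →
      ∑ i, c i * Q ^ (i : ℕ) + a * Q ^ n = 0 → c = 0 ∧ a = 0
  | 0, c, a, _, h => ⟨Subsingleton.elim _ _, by simpa using h⟩
  | n + 1, c, a, hc, h => by
    have hQ : 0 < Q := (abs_nonneg _).trans_lt (hc 0)
    have hsplit : c 0 + Q * (∑ i : Fin n, c i.succ * Q ^ (i : ℕ) + a * Q ^ n) = 0 := by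
      rw [← h, Fin.sum_univ_succ]; simp only [Fin.val_zero, pow_zero, Fin.val_succ]
      rw [mul_add, Finset.mul_sum]; ring_nf
    have h0 : c 0 = 0 :=
      Int.eq_zero_of_abs_lt_dvd ⟨-(∑ i : Fin n, c i.succ * Q ^ (i : ℕ) + a * Q ^ n), by linarith⟩
        (hc 0)
    rw [h0, zero_add, mul_eq_zero] at hsplit
    obtain ⟨htail, ha⟩ := eq_zero_of_sum_mul_pow_add_mul_pow_eq_zero (fun i => c i.succ) a
      (fun i => hc i.succ) (hsplit.resolve_left hQ.ne')
    refine ⟨funext fun i => Fin.cases h0 (fun j => congrFun htail j) i, ha⟩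

theorem eq_of_smul_add_smul_eq_smul {ι R : Type*} [Fintype ι] [CommRing R] [LinearOrder R]
    [IsStrictOrderedRing R] {x y z : ι → R} (hx : x ⬝ᵥ x = z ⬝ᵥ z) (hy : y ⬝ᵥ y = z ⬝ᵥ z)
    {a b : R} (ha : a ≠ 0) (hb : b ≠ 0) (h : a • x + b • y = (a + b) • z) : x = y := by
  have hnorm : (a • x + b • y) ⬝ᵥ (a • x + b • y) = (a + b) ^ 2 * (z ⬝ᵥ z) := by
    rw [h]; simp only [smul_dotProduct, dotProduct_smul, smul_eq_mul]; ring
  simp only [add_dotProduct, dotProduct_add, smul_dotProduct, dotProduct_smul, smul_eq_mul,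
    dotProduct_comm y x, hx, hy] at hnorm
  have hxy : x ⬝ᵥ y = z ⬝ᵥ z := by
    have : (2 * a * b) * (x ⬝ᵥ y - z ⬝ᵥ z) = 0 := by linear_combination hnorm
    have h2ab : 2 * a * b ≠ 0 := by positivity
    exact sub_eq_zero.1 ((mul_eq_zero.1 this).resolve_left h2ab)
  rw [← sub_eq_zero, ← dotProduct_self_eq_zero]
  simp only [sub_dotProduct, dotProduct_sub, dotProduct_comm y x, hx, hy, hxy]
  ring

def NoSmallRelations (R : ℕ) (S : Finset ℕ) : Prop :=
  ∀ s₁ ∈ S, ∀ s₂ ∈ S, ∀ s₃ ∈ S, ∀ c₁ c₂ c₃ : ℤ, |c₁| < R → |c₂| < R → |c₃| < R →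
    c₁ ≠ 0 → c₂ ≠ 0 → c₁ * s₁ + c₂ * s₂ + c₃ * s₃ = 0 → s₁ = s₂

def sphereNumbers (Q n m k : ℕ) : Finset ℕ := (sphere n m k).image fun y => Q ^ n + map Q y

theorem map_lt_pow_of_mem_box {Q m : ℕ} (hmQ : m ≤ Q) :
    ∀ {n : ℕ} {y : Fin n → ℕ}, y ∈ box n m → map Q y < Q ^ n
  | 0, y, _ => by simp
  | n + 1, y, hy => by
    have h0 : y 0 < Q := (mem_box.1 hy 0).trans_le hmQ
    have htail : map Q (y ∘ Fin.succ) < Q ^ n :=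
      map_lt_pow_of_mem_box hmQ (mem_box.2 fun i => mem_box.1 hy i.succ)
    calc map Q y = y 0 + map Q (y ∘ Fin.succ) * Q := map_succ' y
      _ < Q + map Q (y ∘ Fin.succ) * Q := by omega
      _ = (map Q (y ∘ Fin.succ) + 1) * Q := by ring
      _ ≤ Q ^ n * Q := Nat.mul_le_mul_right Q htail
      _ = Q ^ (n + 1) := (pow_succ Q n).symm

theorem mem_sphereNumbers_bounds {Q n m k s : ℕ} (hmQ : m ≤ Q) (hs : s ∈ sphereNumbers Q n m k) :
    Q ^ n ≤ s ∧ s < 2 * Q ^ n := by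
  obtain ⟨y, hy, rfl⟩ := mem_image.1 hs
  have := map_lt_pow_of_mem_box hmQ (sphere_subset_box hy)
  omega

theorem card_sphereNumbers {Q n m k : ℕ} (hmQ : m ≤ Q) :
    #(sphereNumbers Q n m k) = #(sphere n m k) :=
  card_image_of_injOn fun _ hy _ hy' h =>
    map_injOn (fun i => (mem_box.1 (sphere_subset_box hy) i).trans_le hmQ)
      (fun i => (mem_box.1 (sphere_subset_box hy') i).trans_le hmQ) (Nat.add_left_cancel h)

theorem dotProduct_self_eq_of_mem_sphere {n m k : ℕ} {y : Fin n → ℕ} (hy : y ∈ sphere n m k) :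
    (fun i => (y i : ℤ)) ⬝ᵥ (fun i => (y i : ℤ)) = k := by
  rw [← (mem_filter.1 hy).2]; simp [dotProduct, sq]

theorem noSmallRelations_sphereNumbers {R Q n m k : ℕ} (hQ : 3 * R * m ≤ Q) :
    NoSmallRelations R (sphereNumbers Q n m k) := by
  intro s₁ hs₁ s₂ hs₂ s₃ hs₃ c₁ c₂ c₃ hc₁ hc₂ hc₃ hc₁₀ hc₂₀ hrel
  obtain ⟨y₁, hy₁, rfl⟩ := mem_image.1 hs₁
  obtain ⟨y₂, hy₂, rfl⟩ := mem_image.1 hs₂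
  obtain ⟨y₃, hy₃, rfl⟩ := mem_image.1 hs₃
  set v : Fin n → ℤ := fun i => c₁ * y₁ i + c₂ * y₂ i + c₃ * y₃ i
  have hdigits : ∑ i, v i * (Q : ℤ) ^ (i : ℕ) + (c₁ + c₂ + c₃) * (Q : ℤ) ^ n = 0 := by
    have hval : ∀ y : Fin n → ℕ,
        ((Q ^ n + map Q y : ℕ) : ℤ) = Q ^ n + ∑ i, (y i : ℤ) * (Q : ℤ) ^ (i : ℕ) := fun y => by
      push_cast [Behrend.map_apply]; rfl
    have hexpand : ∑ i, v i * (Q : ℤ) ^ (i : ℕ) = c₁ * ∑ i, (y₁ i : ℤ) * (Q : ℤ) ^ (i : ℕ) +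
        c₂ * ∑ i, (y₂ i : ℤ) * (Q : ℤ) ^ (i : ℕ) + c₃ * ∑ i, (y₃ i : ℤ) * (Q : ℤ) ^ (i : ℕ) := by
      simp only [v, add_mul, sum_add_distrib, mul_sum, mul_assoc]
    rw [hval, hval, hval] at hrel
    linear_combination hexpand + hrel
  have hterm : ∀ (c : ℤ) (y : Fin n → ℕ) (i : Fin n), |c| < R → y ∈ sphere n m k →
      |c * y i| < R * m := fun c y i hc hy => by
    rw [abs_mul, Nat.abs_cast]
    exact mul_lt_mul'' hc (by exact_mod_cast mem_box.1 (sphere_subset_box hy) i)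
      (abs_nonneg c) (Nat.cast_nonneg _)
  have hv : ∀ i, |v i| < Q := fun i => by
    have := abs_add_three (c₁ * y₁ i) (c₂ * y₂ i) (c₃ * y₃ i)
    have := hterm c₁ y₁ i hc₁ hy₁; have := hterm c₂ y₂ i hc₂ hy₂; have := hterm c₃ y₃ i hc₃ hy₃
    have : (3 * R * m : ℤ) ≤ Q := by exact_mod_cast hQ
    simp only [v]; linarith
  obtain ⟨hv0, hsum⟩ := eq_zero_of_sum_mul_pow_add_mul_pow_eq_zero v _ hv hdigits
  have hcomb : c₁ • (fun i => (y₁ i : ℤ)) + c₂ • (fun i => (y₂ i : ℤ)) =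
      (c₁ + c₂) • (fun i => (y₃ i : ℤ)) := funext fun i => by
    have := congrFun hv0 i
    simp only [v, Pi.zero_apply] at this
    simp only [Pi.add_apply, Pi.smul_apply, smul_eq_mul]
    linear_combination this - (y₃ i : ℤ) * hsum
  have hy : y₁ = y₂ := by
    have := eq_of_smul_add_smul_eq_smul (by rw [dotProduct_self_eq_of_mem_sphere hy₁,
      dotProduct_self_eq_of_mem_sphere hy₃]) (by rw [dotProduct_self_eq_of_mem_sphere hy₂,
      dotProduct_self_eq_of_mem_sphere hy₃]) hc₁₀ hc₂₀ hcomb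
    exact funext fun i => by exact_mod_cast congrFun this i
  rw [hy]

def progressionBlock (R s r u : ℕ) : Finset ℕ := (range R).image fun i => r + s * (R * u + i)

theorem mem_progressionBlock {R s r u v : ℕ} :
    v ∈ progressionBlock R s r u ↔ ∃ i < R, r + s * (R * u + i) = v := by
  simp [progressionBlock]

theorem card_progressionBlock {R s r u : ℕ} (hs : 0 < s) : #(progressionBlock R s r u) = R := by
  rw [progressionBlock, card_image_of_injective _ fun i j h => by
    simpa [hs.ne'] using h, card_range]

theorem eq_of_mem_progressionBlock {R s r r' u u' v : ℕ} (hr : r < s) (hr' : r' < s)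
    (hv : v ∈ progressionBlock R s r u) (hv' : v ∈ progressionBlock R s r' u') :
    r = r' ∧ u = u' := by
  obtain ⟨i, hi, rfl⟩ := mem_progressionBlock.1 hv
  obtain ⟨i', hi', h⟩ := mem_progressionBlock.1 hv'
  have hrr : r = r' := by
    have := congrArg (· % s) h
    simpa [Nat.add_mul_mod_self_left, Nat.mod_eq_of_lt hr, Nat.mod_eq_of_lt hr'] using this.symm
  subst hrr
  have hk : R * u' + i' = R * u + i :=
    Nat.eq_of_mul_eq_mul_left (by omega) (Nat.add_left_cancel h)
  have := congrArg (· / R) hk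
  simp only [Nat.mul_add_div (by omega : 0 < R), Nat.div_eq_of_lt hi, Nat.div_eq_of_lt hi'] at this
  exact ⟨rfl, by omega⟩

theorem exists_sub_eq_mul_of_mem_progressionBlock {R s r u v w : ℕ}
    (hv : v ∈ progressionBlock R s r u) (hw : w ∈ progressionBlock R s r u) :
    ∃ c : ℤ, |c| < R ∧ (v : ℤ) - w = c * s := by
  obtain ⟨i, hi, rfl⟩ := mem_progressionBlock.1 hv
  obtain ⟨j, hj, rfl⟩ := mem_progressionBlock.1 hw
  refine ⟨i - j, abs_sub_lt_iff.2 ⟨by omega, by omega⟩, by push_cast; ring⟩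

theorem lt_of_mem_progressionBlock {R s r u U v : ℕ} (hr : r < s) (hu : u < U)
    (hv : v ∈ progressionBlock R s r u) : v < s * (R * U) := by
  obtain ⟨i, hi, rfl⟩ := mem_progressionBlock.1 hv
  calc r + s * (R * u + i) < s * (R * u + i + 1) := by rw [mul_add_one]; omega
    _ ≤ s * (R * U) := Nat.mul_le_mul_left s (by nlinarith)

theorem NoSmallRelations.eq_of_progressionBlock_cycle {R : ℕ} {S : Finset ℕ}
    (hS : NoSmallRelations R S) {s₁ s₂ s₃ r₁ r₂ r₃ u₁ u₂ u₃ x y z : ℕ}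
    (hs₁ : s₁ ∈ S) (hs₂ : s₂ ∈ S) (hs₃ : s₃ ∈ S)
    (hx₁ : x ∈ progressionBlock R s₁ r₁ u₁) (hx₂ : x ∈ progressionBlock R s₂ r₂ u₂)
    (hy₂ : y ∈ progressionBlock R s₂ r₂ u₂) (hy₃ : y ∈ progressionBlock R s₃ r₃ u₃)
    (hz₃ : z ∈ progressionBlock R s₃ r₃ u₃) (hz₁ : z ∈ progressionBlock R s₁ r₁ u₁)
    (hxy : x ≠ y) (hzx : z ≠ x) : s₁ = s₂ := by
  obtain ⟨c₁, hc₁, h₁⟩ := exists_sub_eq_mul_of_mem_progressionBlock hz₁ hx₁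
  obtain ⟨c₂, hc₂, h₂⟩ := exists_sub_eq_mul_of_mem_progressionBlock hy₂ hx₂
  obtain ⟨c₃, hc₃, h₃⟩ := exists_sub_eq_mul_of_mem_progressionBlock hy₃ hz₃
  refine hS s₁ hs₁ s₂ hs₂ s₃ hs₃ c₁ (-c₂) c₃ hc₁ (by rwa [abs_neg]) hc₃ ?_ ?_
    (by linear_combination h₂ - h₁ - h₃)
  · rintro rfl; exact hzx (by omega)
  · rw [neg_ne_zero]; rintro rfl; exact hxy (by omega)

def progressionHypergraph (R L U : ℕ) (S : Finset ℕ) : Finset (Finset ℕ) :=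
  (S ×ˢ range L ×ˢ range U).image fun p => progressionBlock R p.1 p.2.1 p.2.2

section ProgressionHypergraph

variable {R L U : ℕ} {S : Finset ℕ}

theorem mem_progressionHypergraph {e : Finset ℕ} :
    e ∈ progressionHypergraph R L U S ↔
      ∃ s ∈ S, ∃ r < L, ∃ u < U, progressionBlock R s r u = e := by
  simp [progressionHypergraph, and_assoc]

theorem NoSmallRelations.eq_of_two_mem_progressionBlock (hS : NoSmallRelations R S)
    (hL : ∀ s ∈ S, L ≤ s)
    {s r u s' r' u' v w : ℕ} (hs : s ∈ S) (hr : r < L) (hs' : s' ∈ S) (hr' : r' < L)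
    (hv : v ∈ progressionBlock R s r u) (hw : w ∈ progressionBlock R s r u)
    (hv' : v ∈ progressionBlock R s' r' u') (hw' : w ∈ progressionBlock R s' r' u')
    (hvw : v ≠ w) : s = s' ∧ r = r' ∧ u = u' := by
  obtain rfl := hS.eq_of_progressionBlock_cycle hs hs' hs hv hv' hw' hw hw hw hvw hvw.symm
  exact ⟨rfl, eq_of_mem_progressionBlock (hr.trans_le (hL s hs)) (hr'.trans_le (hL s hs)) hv hv'⟩

theorem progressionHypergraph_sized (hL : ∀ s ∈ S, L ≤ s) :
    (progressionHypergraph R L U S : Set (Finset ℕ)).Sized R := by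
  intro e he
  obtain ⟨s, hs, r, hr, u, -, rfl⟩ := mem_progressionHypergraph.1 he
  exact card_progressionBlock (hr.trans_le (hL s hs)).pos

theorem card_progressionHypergraph (hS : NoSmallRelations R S) (hL : ∀ s ∈ S, L ≤ s)
    (hR : 2 ≤ R) : #(progressionHypergraph R L U S) = #S * (L * U) := by
  rw [progressionHypergraph, card_image_of_injOn, card_product, card_product, card_range,
    card_range]
  rintro ⟨s, r, u⟩ hp ⟨s', r', u'⟩ hp' h
  simp only [coe_product, coe_range, Set.mem_prod, mem_coe, Set.mem_Iio] at hp hp' h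
  have hcard : 1 < #(progressionBlock R s r u) := by
    rw [card_progressionBlock (hp.2.1.trans_le (hL s hp.1)).pos]; omega
  obtain ⟨v, hv, w, hw, hvw⟩ := one_lt_card.1 hcard
  obtain ⟨rfl, rfl, rfl⟩ := hS.eq_of_two_mem_progressionBlock hL hp.1 hp.2.1 hp'.1 hp'.2.1
    hv hw (h ▸ hv) (h ▸ hw) hvw
  rfl

theorem progressionHypergraph_isLinear (hS : NoSmallRelations R S) (hL : ∀ s ∈ S, L ≤ s) :
    IsLinearHypergraph (progressionHypergraph R L U S) := by
  refine isLinearHypergraph_of_two_mem_inter fun e he f hf v hv w hw hvw => ?_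
  obtain ⟨s, hs, r, hr, u, -, rfl⟩ := mem_progressionHypergraph.1 he
  obtain ⟨s', hs', r', hr', u', -, rfl⟩ := mem_progressionHypergraph.1 hf
  rw [mem_inter] at hv hw
  obtain ⟨rfl, rfl, rfl⟩ :=
    hS.eq_of_two_mem_progressionBlock hL hs hr hs' hr' hv.1 hw.1 hv.2 hw.2 hvw
  rfl

theorem progressionHypergraph_isTriangleFree (hS : NoSmallRelations R S)
    (hL : ∀ s ∈ S, L ≤ s) : IsTriangleFreeHypergraph (progressionHypergraph R L U S) := by
  refine isTriangleFreeHypergraph_of_no_triangle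
    fun e he f hf g hg hef x hx y hy z hz hxy _ hzx => ?_
  obtain ⟨s₁, hs₁, r₁, hr₁, u₁, -, rfl⟩ := mem_progressionHypergraph.1 he
  obtain ⟨s₂, hs₂, r₂, hr₂, u₂, -, rfl⟩ := mem_progressionHypergraph.1 hf
  obtain ⟨s₃, hs₃, r₃, hr₃, u₃, -, rfl⟩ := mem_progressionHypergraph.1 hg
  rw [mem_inter] at hx hy hz
  obtain rfl := hS.eq_of_progressionBlock_cycle hs₁ hs₂ hs₃ hx.1 hx.2 hy.1 hy.2 hz.1 hz.2 hxy hzx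
  obtain ⟨rfl, rfl⟩ := eq_of_mem_progressionBlock (hr₁.trans_le (hL s₁ hs₁))
    (hr₂.trans_le (hL s₁ hs₁)) hx.1 hx.2
  exact hef rfl

theorem progressionHypergraph_subset_range {N : ℕ} (hL : ∀ s ∈ S, L ≤ s)
    (hN : ∀ s ∈ S, s * (R * U) ≤ N) : ∀ e ∈ progressionHypergraph R L U S, e ⊆ range N := by
  intro e he v hv
  obtain ⟨s, hs, r, hr, u, hu, rfl⟩ := mem_progressionHypergraph.1 he
  exact mem_range.2 <|
    (lt_of_mem_progressionBlock (hr.trans_le (hL s hs)) hu hv).trans_le (hN s hs)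

end ProgressionHypergraph

theorem exists_hypergraph_of_sphere {N R n m Q U : ℕ} (hR : 2 ≤ R) (hQ : 3 * R * m ≤ Q)
    (hN : 2 * Q ^ n * (R * U) ≤ N) :
    ∃ E : Finset (Finset (Fin N)), (E : Set (Finset (Fin N))).Sized R ∧
      IsLinearHypergraph E ∧ IsTriangleFreeHypergraph E ∧
      (m ^ n / (n * m ^ 2) : ℝ) * (Q ^ n * U) ≤ #E := by
  obtain ⟨k, hk⟩ := exists_large_sphere n m
  have hmQ : m ≤ Q := le_trans (Nat.le_mul_of_pos_left m (by omega)) hQ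
  set S := sphereNumbers Q n m k
  have hS : NoSmallRelations R S := noSmallRelations_sphereNumbers hQ
  have hL : ∀ s ∈ S, Q ^ n ≤ s := fun s hs => (mem_sphereNumbers_bounds hmQ hs).1
  have hsN : ∀ s ∈ S, s * (R * U) ≤ N := fun s hs =>
    le_trans (Nat.mul_le_mul_right _ (mem_sphereNumbers_bounds hmQ hs).2.le) hN
  obtain ⟨E, hcard, hsized, hlin, htri⟩ :=
    exists_fin_copy (progressionHypergraph_subset_range hL hsN)
      (progressionHypergraph_sized (U := U) hL) (progressionHypergraph_isLinear hS hL)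
      (progressionHypergraph_isTriangleFree hS hL)
  refine ⟨E, hsized, hlin, htri, ?_⟩
  rw [hcard, card_progressionHypergraph hS hL hR, card_sphereNumbers hmQ]
  push_cast at hk ⊢
  exact mul_le_mul_of_nonneg_right hk (by positivity)

theorem four_mul_mul_le_pow {R : ℕ} (hR : 2 ≤ R) (n : ℕ) : 4 * R * n ≤ R ^ (n + 3) :=
  calc 4 * R * n ≤ R ^ 2 * R * R ^ n :=
        Nat.mul_le_mul (Nat.mul_le_mul_right R (by nlinarith))
          (Nat.lt_two_pow_self.le.trans (Nat.pow_le_pow_left hR n))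
    _ = R ^ (n + 3) := by ring

theorem two_mul_pow_mul_le_pow_sq {R n : ℕ} (hR : 2 ≤ R) (hn : 2 ≤ n) :
    2 * (R ^ (n - 1)) ^ n * R ≤ R ^ (n ^ 2) :=
  calc 2 * (R ^ (n - 1)) ^ n * R = (2 * R) * R ^ ((n - 1) * n) := by rw [← pow_mul]; ring
    _ ≤ R ^ n * R ^ ((n - 1) * n) := Nat.mul_le_mul_right _ <|
        calc 2 * R ≤ R ^ 2 := by nlinarith
          _ ≤ R ^ n := Nat.pow_le_pow_right (by omega) hn
    _ = R ^ (n ^ 2) := by rw [← pow_add, ← one_add_mul, Nat.add_sub_cancel' (by omega), sq]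

theorem sq_add_le_of_floor {t : ℝ} {n : ℕ} (hn : 4 ≤ n) (hnt : (n : ℝ) ≤ t) (htn : t < n + 1) :
    t ^ 2 + (n + 3 : ℕ) ≤ ((n - 3) * (n - 2) : ℕ) + 8 * t := by
  have h4 : (4 : ℝ) ≤ n := by exact_mod_cast hn
  push_cast [Nat.cast_sub (by omega : 3 ≤ n), Nat.cast_sub (by omega : 2 ≤ n)]
  nlinarith [mul_nonneg (sub_nonneg.2 hnt) (sub_nonneg.2 htn.le)]

theorem rpow_sq_mul_le {R : ℕ} (hR : 2 ≤ R) {t : ℝ} {n : ℕ} (hn : 4 ≤ n) (hnt : (n : ℝ) ≤ t)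
    (htn : t < n + 1) :
    (R : ℝ) ^ (t ^ 2) * (4 * R * n) ≤ (R : ℝ) ^ ((n - 3) * (n - 2)) * (R : ℝ) ^ (8 * t) := by
  have hR1 : (1 : ℝ) ≤ R := by exact_mod_cast (by omega : 1 ≤ R)
  have hpow : ((4 * R * n : ℕ) : ℝ) ≤ (R : ℝ) ^ ((n + 3 : ℕ) : ℝ) := by
    rw [rpow_natCast]; exact_mod_cast four_mul_mul_le_pow hR n
  calc (R : ℝ) ^ (t ^ 2) * (4 * R * n)
      ≤ (R : ℝ) ^ (t ^ 2) * (R : ℝ) ^ ((n + 3 : ℕ) : ℝ) := by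
        gcongr; exact_mod_cast hpow
    _ = (R : ℝ) ^ (t ^ 2 + (n + 3 : ℕ)) := (rpow_add (by linarith) _ _).symm
    _ ≤ (R : ℝ) ^ (((n - 3) * (n - 2) : ℕ) + 8 * t) :=
        rpow_le_rpow_of_exponent_le hR1 (sq_add_le_of_floor hn hnt htn)
    _ = (R : ℝ) ^ ((n - 3) * (n - 2)) * (R : ℝ) ^ (8 * t) := by
        rw [rpow_add (by linarith), rpow_natCast]

theorem natCast_eq_rpow_sqrt_logb_sq {R N : ℕ} (hR : 1 < (R : ℝ)) (hN : 0 < N) :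
    (N : ℝ) = (R : ℝ) ^ (√(logb R N) ^ 2) := by
  have hN1 : (1 : ℝ) ≤ N := by exact_mod_cast hN
  rw [sq_sqrt (logb_nonneg hR hN1), rpow_logb (by linarith) hR.ne' (by linarith)]

theorem four_lt_of_rpow_lt_rpow_sq_sq {R t : ℝ} (hR : 1 < R) (ht : 0 ≤ t)
    (h : R ^ (8 * t) < (R ^ (t ^ 2)) ^ 2) : 4 < t := by
  rw [← rpow_mul_natCast (by linarith), rpow_lt_rpow_left_iff hR, Nat.cast_ofNat] at h
  nlinarith

theorem exists_hypergraph_of_pow_sq_le {N R n : ℕ} (hR : 3 ≤ R) (hn : 4 ≤ n)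
    (hN : R ^ (n ^ 2) ≤ N) :
    ∃ E : Finset (Finset (Fin N)), (E : Set (Finset (Fin N))).Sized R ∧
      IsLinearHypergraph E ∧ IsTriangleFreeHypergraph E ∧
      (N : ℝ) * R ^ ((n - 3) * (n - 2)) ≤ 4 * R * n * #E := by
  set m := R ^ (n - 3)
  set Q := R ^ (n - 1)
  set U := N / (2 * Q ^ n * R)
  have hQ : 3 * R * m ≤ Q := calc
    3 * R * m ≤ R * R * m := Nat.mul_le_mul_right m (Nat.mul_le_mul_right R hR)
    _ = Q := by rw [← sq, ← pow_add]; congr 1; omega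
  have hQN : 2 * Q ^ n * R ≤ N := (two_mul_pow_mul_le_pow_sq (by omega) (by omega)).trans hN
  have hNU : (N : ℝ) ≤ 4 * R * (Q ^ n * U) := by
    have hU : 0 < U := Nat.div_pos hQN (by positivity)
    have h1 : N < 2 * Q ^ n * R * (U + 1) := Nat.lt_mul_div_succ N (by positivity)
    have h2 := Nat.mul_le_mul_left (2 * Q ^ n * R) (show U + 1 ≤ 2 * U by omega)
    exact_mod_cast (by linarith : N ≤ 4 * R * (Q ^ n * U))
  obtain ⟨E, hsized, hlin, htri, hcard⟩ := exists_hypergraph_of_sphere (N := N) (U := U)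
    (by omega : 2 ≤ R) hQ (calc
      2 * Q ^ n * (R * U) = 2 * Q ^ n * R * (N / (2 * Q ^ n * R)) := by ring
      _ ≤ N := Nat.mul_div_le N _)
  refine ⟨E, hsized, hlin, htri, ?_⟩
  have hm : (m : ℝ) ^ n / (n * m ^ 2) = (R : ℝ) ^ ((n - 3) * (n - 2)) / n := by
    have hsplit : m ^ n = R ^ ((n - 3) * (n - 2)) * m ^ 2 := by
      rw [← pow_mul, ← pow_mul, ← pow_add, ← mul_add, Nat.sub_add_cancel (by omega)]
    have hm0 : (m : ℝ) ≠ 0 := by exact_mod_cast (pow_pos (by omega : 0 < R) _).ne'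
    rw [show (m : ℝ) ^ n = (R : ℝ) ^ ((n - 3) * (n - 2)) * m ^ 2 by exact_mod_cast hsplit]
    field_simp
  rw [hm] at hcard
  have hn0 : (0 : ℝ) < n := by exact_mod_cast (by omega : 0 < n)
  calc (N : ℝ) * R ^ ((n - 3) * (n - 2)) ≤ 4 * R * (Q ^ n * U) * R ^ ((n - 3) * (n - 2)) := by
        gcongr
    _ = 4 * R * n * ((R : ℝ) ^ ((n - 3) * (n - 2)) / n * (Q ^ n * U)) := by field_simp
    _ ≤ 4 * R * n * #E := by gcongr

theorem exists_hypergraph_of_rpow_lt {N R : ℕ} (hR : 3 ≤ R)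
    (h : (R : ℝ) ^ (8 * √(logb R N)) < (N : ℝ) ^ 2) :
    ∃ E : Finset (Finset (Fin N)), (E : Set (Finset (Fin N))).Sized R ∧
      IsLinearHypergraph E ∧ IsTriangleFreeHypergraph E ∧
      (N : ℝ) ^ 2 / (R : ℝ) ^ (8 * √(logb R N)) ≤ #E := by
  have hR1 : (1 : ℝ) < R := by exact_mod_cast (by omega : 1 < R)
  have hN : 0 < N := Nat.pos_of_ne_zero <| by
    rintro rfl
    rw [Nat.cast_zero, zero_pow two_ne_zero] at h
    exact (rpow_nonneg (Nat.cast_nonneg R) _).not_gt h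
  set t := √(logb R N)
  have hNR : (N : ℝ) = (R : ℝ) ^ (t ^ 2) := natCast_eq_rpow_sqrt_logb_sq hR1 hN
  have ht : 4 < t := four_lt_of_rpow_lt_rpow_sq_sq hR1 (sqrt_nonneg _) (hNR ▸ h)
  set n := ⌊t⌋₊
  have hn : 4 ≤ n := Nat.le_floor (by exact_mod_cast ht.le)
  have hnt : (n : ℝ) ≤ t := Nat.floor_le (by linarith)
  have hRnN : R ^ (n ^ 2) ≤ N := by
    have : ((R ^ (n ^ 2) : ℕ) : ℝ) ≤ N := by
      rw [hNR, Nat.cast_pow, ← rpow_natCast]; push_cast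
      exact rpow_le_rpow_of_exponent_le hR1.le (pow_le_pow_left₀ (by positivity) hnt 2)
    exact_mod_cast this
  obtain ⟨E, hsized, hlin, htri, hcard⟩ := exists_hypergraph_of_pow_sq_le hR hn hRnN
  refine ⟨E, hsized, hlin, htri, ?_⟩
  have hkey := rpow_sq_mul_le (by omega : 2 ≤ R) hn hnt (Nat.lt_floor_add_one t)
  rw [← hNR] at hkey
  have hA : (0 : ℝ) < 4 * R * n * (R : ℝ) ^ ((n - 3) * (n - 2)) := by
    have : (0 : ℝ) < n := by exact_mod_cast (by omega : 0 < n)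
    positivity
  rw [div_le_iff₀ (rpow_pos_of_pos (by linarith) _), ← mul_le_mul_iff_of_pos_right hA]
  calc (N : ℝ) ^ 2 * (4 * R * n * (R : ℝ) ^ ((n - 3) * (n - 2)))
      = (N * (4 * R * n)) * (N * (R : ℝ) ^ ((n - 3) * (n - 2))) := by ring
    _ ≤ ((R : ℝ) ^ ((n - 3) * (n - 2)) * (R : ℝ) ^ (8 * t)) * (4 * R * n * #E) := by
        gcongr
    _ = #E * (R : ℝ) ^ (8 * t) * (4 * R * n * (R : ℝ) ^ ((n - 3) * (n - 2))) := by ring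

theorem stmt16_general (N R : ℕ) (hR3 : 3 ≤ R) (hRN : R ≤ N) :
    ∃ E : Finset (Finset (Fin N)),
      (∀ e ∈ E, e.card = R) ∧
      (N : ℝ) ^ 2 / (R : ℝ) ^ (8 * Real.sqrt (Real.logb R N)) ≤ (E.card : ℝ) ∧
      (∀ e ∈ E, ∀ f ∈ E, e ≠ f → (e ∩ f).card ≤ 1) ∧
      (∀ e ∈ E, ∀ f ∈ E, ∀ g ∈ E, e ≠ f → f ≠ g → g ≠ e →
        (e ∩ f).card = 1 → (f ∩ g).card = 1 → (g ∩ e).card = 1 →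
          (e ∩ f ∩ g).card = 1) := by
  rcases lt_or_ge ((R : ℝ) ^ (8 * √(logb R N))) ((N : ℝ) ^ 2) with h | h
  · obtain ⟨E, hsized, hlin, htri, hcard⟩ := exists_hypergraph_of_rpow_lt hR3 h
    exact ⟨E, fun e he => hsized he, hcard, hlin, htri⟩
  · obtain ⟨E, hsized, hlin, htri, hcard⟩ := exists_hypergraph_singleton hRN
    have hR : (0 : ℝ) < R := by exact_mod_cast (by omega : 0 < R)
    refine ⟨E, fun e he => hsized he, ?_, hlin, htri⟩
    rwa [hcard, Nat.cast_one, div_le_one (rpow_pos_of_pos hR _)]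

/-- Erdős–Frankl–Rödl: for `N ≥ R ≥ log N`, `R ≥ 3`, there is an `N`-vertex `R`-uniform
hypergraph with at least `N²/R^{8√(log_R N)}` edges that is linear and triangle-free. -/
theorem stmt16 (N R : ℕ) (hR3 : 3 ≤ R) (hN3 : 3 ≤ N) (hRN : R ≤ N)
    (hlog : Real.log N ≤ (R : ℝ)) :
    ∃ E : Finset (Finset (Fin N)),
      (∀ e ∈ E, e.card = R) ∧
      (N : ℝ) ^ 2 / (R : ℝ) ^ (8 * Real.sqrt (Real.logb R N)) ≤ (E.card : ℝ) ∧
      (∀ e ∈ E, ∀ f ∈ E, e ≠ f → (e ∩ f).card ≤ 1) ∧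
      (∀ e ∈ E, ∀ f ∈ E, ∀ g ∈ E, e ≠ f → f ≠ g → g ≠ e →
        (e ∩ f).card = 1 → (f ∩ g).card = 1 → (g ∩ e).card = 1 →
          (e ∩ f ∩ g).card = 1) :=
  stmt16_general N R hR3 hRN
end

section
/- Let G be a 2-connected graph on r+1 vertices, let F* be an r-uniform hypergraph of girth at least r+2, and let F be a graph on V(F*) obtained by placing inside each hyperedge of F* (a graph on r vertices embedded arbitrarily into the edge), where G is not contained in any r-vertex graph. If G is not contained in any single placed copy, then F is G-free: any copy of G in F would have two vertices in different hyperedges, and a cycle of G through them would yield a hypergraph cycle of length at most r+1 in F*, contradicting the girth condition. -/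
/-!
Map a copy of `G` into `F` and walk along a cycle of `G` through two given vertices: consecutive
image vertices share a hyperedge, so the cycle yields a cyclic sequence of at most `r + 1`
hyperedges joined at distinct vertices. In a linear hypergraph such a sequence, if not constant,
can be shortened (merging two equal consecutive hyperedges, or cutting along a hyperedge meeting
a non-consecutive one) until it becomes a loose cycle, which the girth forbids. Hence every two
image vertices lie in a common hyperedge; a triangle argument then puts all `r + 1` of them into
one hyperedge of size `r`.
-/

/-- `e, v` form a loose cycle of length `ℓ` in the hypergraph `E`. -/
def IsLooseCycle {V : Type} [DecidableEq V] (E : Finset (Finset V)) (ℓ : ℕ)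
    (e : ZMod ℓ → Finset V) (v : ZMod ℓ → V) : Prop :=
  Function.Injective e ∧ Function.Injective v ∧ (∀ i, e i ∈ E) ∧
    (∀ i, e i ∩ e (i + 1) = {v (i + 1)}) ∧
    (∀ i j, j ≠ i → j ≠ i + 1 → i ≠ j + 1 → e i ∩ e j = ∅)

namespace ZMod

variable {k : ℕ}

theorem add_natCast_injOn (s : ZMod k) {a b : ℕ} (ha : a < k) (hb : b < k)
    (h : s + a = s + b) : a = b := by
  simpa [val_natCast, Nat.mod_eq_of_lt ha, Nat.mod_eq_of_lt hb] using
    congrArg val (add_left_cancel h)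

variable [NeZero k]

theorem val_add_one_eq_mod (t : ZMod k) : (t + 1).val = (t.val + 1) % k := by
  rw [val_add, val_one_eq_one_mod, Nat.add_mod_mod]

theorem forall_of_add_one {p : ZMod k → Prop} (i : ZMod k) (hi : p i)
    (h : ∀ j, p j → p (j + 1)) (j : ZMod k) : p j := by
  have hn : ∀ n : ℕ, p (i + n) := by
    intro n
    induction n with
    | zero => simpa using hi
    | succ n ih => simpa [add_assoc] using h _ ih
  simpa using hn (j - i).val

theorem eq_of_forall_add_one_eq {β : Type*} {f : ZMod k → β} (h : ∀ j, f (j + 1) = f j)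
    (i j : ZMod k) : f j = f i :=
  forall_of_add_one (p := fun j => f j = f i) i rfl (fun j hj => (h j).trans hj) j

theorem eq_add_val_sub (i j : ZMod k) : j = i + ((j - i).val : ZMod k) := by
  rw [natCast_zmod_val, add_sub_cancel]

end ZMod

variable {V : Type}

def IsLinearFamily [DecidableEq V] (E : Finset (Finset V)) : Prop :=
  ∀ e ∈ E, ∀ f ∈ E, e ≠ f → (e ∩ f).card ≤ 1

def LooseCycleFree [DecidableEq V] (E : Finset (Finset V)) (L : ℕ) : Prop :=
  ∀ ℓ : ℕ, 3 ≤ ℓ → ℓ ≤ L → ¬ ∃ (e : ZMod ℓ → Finset V) (v : ZMod ℓ → V), IsLooseCycle E ℓ e v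

theorem IsLinearFamily.eq_of_mem_of_mem [DecidableEq V] {E : Finset (Finset V)}
    (hE : IsLinearFamily E) {e f : Finset V} (he : e ∈ E) (hf : f ∈ E) {x y : V}
    (hx : x ∈ e ∩ f) (hy : y ∈ e ∩ f) (hxy : x ≠ y) : e = f := by
  by_contra hef
  exact hxy (Finset.card_le_one.mp (hE e he f hf hef) x hx y hy)

/-- Unlike in the usual notion of a Berge cycle, the edges `e i` may repeat. -/
structure IsBergeCycle (E : Finset (Finset V)) (k : ℕ) (e : ZMod k → Finset V)
    (v : ZMod k → V) : Prop where
  mem : ∀ i, e i ∈ E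
  injective : Function.Injective v
  mem_left : ∀ i, v (i + 1) ∈ e i
  mem_right : ∀ i, v i ∈ e i

namespace IsBergeCycle

variable {E : Finset (Finset V)} {k : ℕ} {e : ZMod k → Finset V} {v : ZMod k → V}

theorem shortcut (hc : IsBergeCycle E k e v) (s : ZMod k) {n : ℕ} (hn : 1 ≤ n)
    (hnk : n < k) {x : V} (hxs : x ∈ e s) (hxn : x ∈ e (s + n))
    (hxv : ∀ a : ℕ, 1 ≤ a → a ≤ n → v (s + a) ≠ x) :
    ∃ e' v', IsBergeCycle E (n + 1) e' v' ∧ e' 0 = e s ∧ e' 1 = e (s + 1) := by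
  have hval : ∀ t : ZMod (n + 1), (t + 1).val = t.val + 1 ∨ (t.val = n ∧ t + 1 = 0) := by
    intro t
    have := t.val_lt
    rw [ZMod.val_add_one_eq_mod]
    rcases (by omega : t.val + 1 < n + 1 ∨ t.val = n) with h | h
    · exact .inl (Nat.mod_eq_of_lt h)
    · refine .inr ⟨h, (ZMod.val_eq_zero _).mp ?_⟩
      rw [ZMod.val_add_one_eq_mod, h, Nat.mod_self]
  refine ⟨fun t => e (s + t.val), fun t => if t = 0 then x else v (s + t.val),
    ⟨fun t => hc.mem _, ?_, fun t => ?_, fun t => ?_⟩, by simp, ?_⟩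
  · intro t t' htt'
    have ht := t.val_lt
    have ht' := t'.val_lt
    have hpos : ∀ t : ZMod (n + 1), t ≠ 0 → 1 ≤ t.val := fun t ht =>
      Nat.one_le_iff_ne_zero.mpr ((ZMod.val_ne_zero t).mpr ht)
    by_cases h0 : t = 0 <;> by_cases h0' : t' = 0 <;>
      simp only [h0, h0', ite_true, ite_false] at htt'
    · rw [h0, h0']
    · exact absurd htt'.symm (hxv _ (hpos _ h0') (by omega))
    · exact absurd htt' (hxv _ (hpos _ h0) (by omega))
    · exact ZMod.val_injective _ (ZMod.add_natCast_injOn s (by omega) (by omega)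
        (hc.injective htt'))
  · rcases hval t with h | ⟨h, h0⟩
    · have : t + 1 ≠ 0 := fun h' => by simp [h', ZMod.val_zero] at h
      simpa [this, h, add_assoc] using hc.mem_left (s + t.val)
    · simpa [h0, h] using hxn
  · by_cases h0 : t = 0
    · simpa [h0] using hxs
    · simpa [h0] using hc.mem_right (s + t.val)
  · have : (1 : ZMod (n + 1)).val = 1 := by
      rw [ZMod.val_one_eq_one_mod, Nat.mod_eq_of_lt (by omega)]
    simp [this]

theorem exists_shorter_of_inter_nonempty [NeZero k] [DecidableEq V]
    (hc : IsBergeCycle E k e v) {i j : ZMod k}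
    (hji : j ≠ i) (hji' : j ≠ i + 1) (hij : i ≠ j + 1) (hx : (e i ∩ e j).Nonempty) :
    ∃ m < k, 2 ≤ m ∧ ∃ (e' : ZMod m → Finset V) (v' : ZMod m → V) (s : ZMod k),
      IsBergeCycle E m e' v' ∧ e' 0 = e s ∧ e' 1 = e (s + 1) := by
  obtain ⟨x, hx⟩ := hx
  rw [Finset.mem_inter] at hx
  set d := (j - i).val
  have hj : j = i + d := ZMod.eq_add_val_sub i j
  have hdk := (j - i).val_lt
  have hk := NeZero.one_le (n := k)
  have hd0 : d ≠ 0 := fun h => hji (by simpa [h] using hj)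
  have hd1 : d ≠ 1 := fun h => hji' (by simpa [h] using hj)
  have hdk1 : d ≠ k - 1 := fun h => hij <| by
    have : ((k - 1 : ℕ) : ZMod k) + 1 = 0 := by simp [Nat.cast_sub hk]
    rw [hj, h, add_assoc, this, add_zero]
  -- `x` is a vertex of at most one of the two arcs between `e i` and `e j`: cut along the other.
  by_cases hxv : ∃ a : ℕ, 1 ≤ a ∧ a ≤ d ∧ v (i + a) = x
  · obtain ⟨a, ha1, had, rfl⟩ := hxv
    have hback : i + d + ((k - d : ℕ) : ZMod k) = i := by
      rw [add_assoc, ← Nat.cast_add, Nat.add_sub_cancel' (by omega), ZMod.natCast_self, add_zero]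
    obtain ⟨e', v', hc', h0, h1⟩ := hc.shortcut (i + d) (n := k - d) (by omega) (by omega)
      (hj ▸ hx.2) (by rw [hback]; exact hx.1) fun b hb1 hbd h => by
        have h' := hc.injective h
        rw [add_assoc, ← Nat.cast_add, ← ZMod.natCast_mod] at h'
        have := ZMod.add_natCast_injOn i (Nat.mod_lt _ (by omega)) (by omega) h'
        rcases (by omega : d + b < k ∨ d + b = k) with hlt | heq
        · rw [Nat.mod_eq_of_lt hlt] at this; omega
        · rw [heq, Nat.mod_self] at this; omega
    exact ⟨k - d + 1, by omega, by omega, e', v', i + d, hc', h0, h1⟩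
  · push Not at hxv
    obtain ⟨e', v', hc', h0, h1⟩ := hc.shortcut i (n := d) (by omega) (by omega) hx.1
      (hj ▸ hx.2) hxv
    exact ⟨d + 1, by omega, by omega, e', v', i, hc', h0, h1⟩

theorem edge_add_one_eq [DecidableEq V] {L : ℕ} (hlin : IsLinearFamily E)
    (hfree : LooseCycleFree E L) (hc : IsBergeCycle E k e v) (hk : 2 ≤ k) (hkL : k ≤ L)
    (i : ZMod k) : e (i + 1) = e i := by
  induction k using Nat.strong_induction_on with
  | _ k ih =>
  have : NeZero k := ⟨by omega⟩
  have shorter : ∀ m < k, 2 ≤ m → ∀ (e' : ZMod m → Finset V) (v' : ZMod m → V) (s : ZMod k),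
      IsBergeCycle E m e' v' → e' 0 = e s → e' 1 = e (s + 1) → e (s + 1) = e s := by
    intro m hmk hm e' v' s hc' h0 h1
    simpa [h0, h1] using ih m hmk hc' hm (by omega) 0
  by_contra hne
  by_cases hrep : ∃ j, e (j + 1) = e j
  · -- Merging `e j = e (j + 1)` with `e (j + 2) ≠ e (j + 1)` keeps the cycle non-constant.
    obtain ⟨j, hj, hj'⟩ : ∃ j, e (j + 1) = e j ∧ e (j + 1 + 1) ≠ e (j + 1) := by
      by_contra h
      push Not at h
      obtain ⟨j₀, hj₀⟩ := hrep
      exact hne (ZMod.forall_of_add_one (p := fun j => e (j + 1) = e j) j₀ hj₀ h i)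
    have hk3 : 3 ≤ k := by
      by_contra hk3
      obtain rfl : k = 2 := by omega
      exact hj' (by rw [(by decide : ∀ j : ZMod 2, j + 1 + 1 = j) j, hj])
    have hprev : j + 1 + ((k - 2 : ℕ) : ZMod k) = j - 1 := by
      simp [Nat.cast_sub (by omega : 2 ≤ k)]; ring
    obtain ⟨e', v', hc', h0, h1⟩ := hc.shortcut (j + 1) (n := k - 2) (by omega) (by omega)
      (hj ▸ hc.mem_right j) (by simpa [hprev] using hc.mem_left (j - 1)) fun a ha1 ha2 h => by
        have := ZMod.add_natCast_injOn j (a := 1 + a) (b := 0) (by omega) (by omega)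
          (by simpa [add_assoc] using hc.injective h)
        omega
    exact hj' (shorter (k - 2 + 1) (by omega) (by omega) e' v' (j + 1) hc' h0 h1)
  · push Not at hrep
    have hsingle : ∀ j, e j ∩ e (j + 1) = {v (j + 1)} := by
      intro j
      have hvj : v (j + 1) ∈ e j ∩ e (j + 1) := Finset.mem_inter.mpr ⟨hc.mem_left j, hc.mem_right _⟩
      refine Finset.eq_singleton_iff_unique_mem.mpr ⟨hvj, fun y hy => by_contra fun hy' => ?_⟩
      exact hrep j (hlin.eq_of_mem_of_mem (hc.mem j) (hc.mem _) hy hvj hy').symm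
    have hk3 : 3 ≤ k := by
      by_contra hk3
      obtain rfl : k = 2 := by omega
      have h0 := hsingle 0
      have : v 0 ∈ e 0 ∩ e (0 + 1) :=
        Finset.mem_inter.mpr ⟨hc.mem_right 0, (by decide : (1 + 1 : ZMod 2) = 0) ▸ hc.mem_left 1⟩
      rw [h0, Finset.mem_singleton] at this
      exact absurd (hc.injective this) (by decide)
    have hfar : ∀ i j, j ≠ i → j ≠ i + 1 → i ≠ j + 1 → e i ∩ e j = ∅ := by
      intro i j h1 h2 h3
      by_contra hij
      obtain ⟨m, hmk, hm, e', v', s, hc', h0, h1⟩ :=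
        hc.exists_shorter_of_inter_nonempty h1 h2 h3 (Finset.nonempty_iff_ne_empty.mpr hij)
      exact hrep s (shorter m hmk hm e' v' s hc' h0 h1)
    have hinj : Function.Injective e := by
      intro i j hij
      by_contra hne
      by_cases h2 : j = i + 1
      · exact hrep i (h2 ▸ hij.symm)
      by_cases h3 : i = j + 1
      · exact hrep j (h3 ▸ hij)
      have := hfar i j (Ne.symm hne) h2 h3
      rw [hij, Finset.inter_self] at this
      exact Finset.notMem_empty _ (this ▸ hc.mem_right j)
    exact hfree k hk3 hkL ⟨e, v, hinj, hc.injective, hc.mem, hsingle, hfar⟩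

end IsBergeCycle

theorem IsLinearFamily.exists_mem_forall_mem_of_cyclic [DecidableEq V] {E : Finset (Finset V)}
    {L k : ℕ} (hlin : IsLinearFamily E) (hfree : LooseCycleFree E L) (hk : 2 ≤ k) (hkL : k ≤ L)
    {u : ZMod k → V} (hu : Function.Injective u)
    (hadj : ∀ t, ∃ f ∈ E, u t ∈ f ∧ u (t + 1) ∈ f) : ∃ f ∈ E, ∀ t, u t ∈ f := by
  have : NeZero k := ⟨by omega⟩
  choose g hgE hg hg' using hadj
  have hc : IsBergeCycle E k g u := ⟨hgE, hu, hg', hg⟩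
  have hconst := ZMod.eq_of_forall_add_one_eq (hc.edge_add_one_eq hlin hfree hk hkL) 0
  exact ⟨g 0, hgE 0, fun t => hconst t ▸ hg t⟩

theorem IsLinearFamily.exists_mem_superset_of_pairwise [DecidableEq V] {E : Finset (Finset V)}
    {L : ℕ} (hlin : IsLinearFamily E) (hfree : LooseCycleFree E L) (hL : 3 ≤ L)
    {S : Finset V} (hS : S.Nontrivial)
    (hpair : ∀ x ∈ S, ∀ y ∈ S, x ≠ y → ∃ f ∈ E, x ∈ f ∧ y ∈ f) : ∃ f ∈ E, S ⊆ f := by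
  obtain ⟨a, ha, b, hb, hab⟩ := hS
  obtain ⟨f, hfE, haf, hbf⟩ := hpair a ha b hb hab
  refine ⟨f, hfE, fun y hy => ?_⟩
  by_cases hya : y = a
  · exact hya ▸ haf
  by_cases hyb : y = b
  · exact hyb ▸ hbf
  have hZ3 : ∀ t : ZMod 3, t = 0 ∨ t = 1 ∨ t = 2 := by decide
  obtain ⟨u, hu0, hu1, hu2⟩ : ∃ u : ZMod 3 → V, u 0 = a ∧ u 1 = b ∧ u 2 = y :=
    ⟨![a, b, y], rfl, rfl, rfl⟩
  have hu : Function.Injective u := by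
    intro s t hst
    rcases hZ3 s with rfl | rfl | rfl <;> rcases hZ3 t with rfl | rfl | rfl <;>
      simp_all [eq_comm]
  have hadj : ∀ t : ZMod 3, ∃ f ∈ E, u t ∈ f ∧ u (t + 1) ∈ f := by
    intro t
    rcases hZ3 t with rfl | rfl | rfl
    · simpa [hu0, hu1] using hpair a ha b hb hab
    · simpa [hu1, hu2, (by decide : (1 + 1 : ZMod 3) = 2)] using hpair b hb y hy (Ne.symm hyb)
    · simpa [hu2, hu0, (by decide : (2 + 1 : ZMod 3) = 0)] using hpair y hy a ha hya
  obtain ⟨g, hgE, hg⟩ := hlin.exists_mem_forall_mem_of_cyclic hfree (by norm_num) hL hu hadj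
  have hgf := hlin.eq_of_mem_of_mem hgE hfE (Finset.mem_inter.mpr ⟨hu0 ▸ hg 0, haf⟩)
    (Finset.mem_inter.mpr ⟨hu1 ▸ hg 1, hbf⟩) hab
  exact hgf ▸ hu2 ▸ hg 2

theorem SimpleGraph.Walk.IsCycle.exists_zmod {α : Type*} {G : SimpleGraph α} {z : α}
    {w : G.Walk z z} (hw : w.IsCycle) :
    ∃ u : ZMod w.length → α, Function.Injective u ∧ (∀ t, G.Adj (u t) (u (t + 1))) ∧
      ∀ x ∈ w.support, ∃ t, u t = x := by
  have hlen := hw.three_le_length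
  have : NeZero w.length := ⟨by omega⟩
  refine ⟨fun t => w.getVert t.val, fun s t h => ZMod.val_injective _ ?_, fun t => ?_,
    fun x hx => ?_⟩
  · have := s.val_lt
    have := t.val_lt
    exact hw.getVert_injOn' (by simp only [Set.mem_ofPred_eq]; omega)
      (by simp only [Set.mem_ofPred_eq]; omega) h
  · have ht := t.val_lt
    have hadj := w.adj_getVert_succ ht
    simp only [ZMod.val_add_one_eq_mod]
    rcases (by omega : t.val + 1 < w.length ∨ t.val + 1 = w.length) with h | h
    · rwa [Nat.mod_eq_of_lt h]
    · rw [h, Nat.mod_self, getVert_zero]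
      rwa [h, getVert_length] at hadj
  · obtain ⟨n, rfl, hn⟩ := mem_support_iff_exists_getVert.mp hx
    rcases hn.lt_or_eq with hn | rfl
    · exact ⟨n, by simp [ZMod.val_natCast, Nat.mod_eq_of_lt hn]⟩
    · exact ⟨0, by simp⟩

theorem IsLinearFamily.exists_mem_forall_mem_of_isCycle [DecidableEq V] {α : Type*}
    {E : Finset (Finset V)} {L : ℕ} (hlin : IsLinearFamily E) (hfree : LooseCycleFree E L)
    {G : SimpleGraph α} {F : SimpleGraph V} (hF : ∀ x y, F.Adj x y → ∃ f ∈ E, x ∈ f ∧ y ∈ f)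
    {φ : G →g F} (hφ : Function.Injective φ) {z : α} {w : G.Walk z z} (hw : w.IsCycle)
    (hwL : w.length ≤ L) : ∃ f ∈ E, ∀ x ∈ w.support, φ x ∈ f := by
  obtain ⟨u, hu, hadj, hsupp⟩ := hw.exists_zmod
  obtain ⟨f, hfE, hf⟩ := hlin.exists_mem_forall_mem_of_cyclic hfree
    (by have := hw.three_le_length; omega) hwL (hφ.comp hu) fun t => hF _ _ (φ.map_adj (hadj t))
  refine ⟨f, hfE, fun x hx => ?_⟩
  obtain ⟨t, rfl⟩ := hsupp x hx
  exact hf t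

/-- Let `G` be a 2-connected graph on `r + 1` vertices (any two vertices lie on a common
cycle), let `F*` be an `r`-uniform hypergraph of girth at least `r + 2` (no two edges
sharing two vertices, no loose cycle of length at most `r + 1`), and let `F` be a graph on
the vertices of `F*` each of whose edges lies inside some hyperedge of `F*` (a graph placed
inside each hyperedge). Then `F` contains no copy of `G`. -/
theorem stmt19 {α V : Type} [Fintype α] [DecidableEq V] (r : ℕ) (hr : 2 ≤ r)
    (G : SimpleGraph α) (hcard : Fintype.card α = r + 1)
    (h2conn : ∀ x y : α, x ≠ y → ∃ (z : α) (w : G.Walk z z),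
      w.IsCycle ∧ x ∈ w.support ∧ y ∈ w.support)
    (E : Finset (Finset V)) (hunif : ∀ e ∈ E, e.card = r)
    (hlin : ∀ e ∈ E, ∀ f ∈ E, e ≠ f → (e ∩ f).card ≤ 1)
    (hgirth : ∀ ℓ : ℕ, 3 ≤ ℓ → ℓ ≤ r + 1 →
      ¬ ∃ (e : ZMod ℓ → Finset V) (v : ZMod ℓ → V), IsLooseCycle E ℓ e v)
    (F : SimpleGraph V)
    (hF : ∀ x y, F.Adj x y → ∃ e ∈ E, x ∈ e ∧ y ∈ e) :
    ¬ ∃ φ : G →g F, Function.Injective φ := by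
  rintro ⟨φ, hφ⟩
  have hpair : ∀ p q, p ≠ q → ∃ f ∈ E, φ p ∈ f ∧ φ q ∈ f := by
    intro p q hpq
    obtain ⟨z, w, hw, hp, hq⟩ := h2conn p q hpq
    have hlen : w.length ≤ r + 1 := by
      simpa [hcard] using hw.support_nodup.length_le_card
    obtain ⟨f, hfE, hf⟩ :=
      IsLinearFamily.exists_mem_forall_mem_of_isCycle hlin hgirth hF hφ hw hlen
    exact ⟨f, hfE, hf p hp, hf q hq⟩
  have hS : (Finset.univ.image φ).Nontrivial := by
    rw [← Finset.one_lt_card_iff_nontrivial, Finset.card_image_of_injective _ hφ,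
      Finset.card_univ]
    omega
  have hpairS : ∀ x ∈ Finset.univ.image φ, ∀ y ∈ Finset.univ.image φ, x ≠ y →
      ∃ f ∈ E, x ∈ f ∧ y ∈ f := by
    simp only [Finset.mem_image, Finset.mem_univ, true_and]
    rintro _ ⟨p, rfl⟩ _ ⟨q, rfl⟩ hpq
    exact hpair p q (ne_of_apply_ne φ hpq)
  obtain ⟨f, hfE, hsub⟩ :=
    IsLinearFamily.exists_mem_superset_of_pairwise hlin hgirth (by omega) hS hpairS
  have := Finset.card_le_card hsub
  rw [Finset.card_image_of_injective _ hφ, Finset.card_univ, hcard, hunif f hfE] at this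
  omega
end
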